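/- For every simple graph G containing at least one edge and every odd integer k ≥ 7, the girth of the apex k-subdivision Ĝ_k of G equals k + 3. -/

import Mathlib

/-!
Original vertices are pairwise non-adjacent and the apex sees only original vertices, so every
cycle passes through a subdivision vertex. Subdivision vertices have degree 2, so the cycle then
contains the whole subdivided path `fst e, u_e^1, …, u_e^k, snd e` of some edge `e`, and it leaves
`fst e` through a second neighbour, which lies off that path because `fst e ≠ snd e`. Hence every
cycle has at least `k + 3` vertices, and the apex closes each subdivided path into a cycle of
exactly that length.
-/

open Set

/-- The apex `k`-subdivision of a simple graph `G`, given an orientation `fst, snd` of its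
edges: every edge `e` is replaced by a path `fst e, u_e^1, …, u_e^k, snd e` through `k` new
internal vertices (here `⟨e, t⟩` is `u_e^{t+1}`), and one new apex vertex (`none`) is added,
adjacent exactly to the original vertices of `G`. -/
def ApexSubdiv {V : Type*} (G : SimpleGraph V) (k : ℕ) (fst snd : Sym2 V → V) :
    SimpleGraph (Option (V ⊕ G.edgeSet × Fin k)) :=
  SimpleGraph.fromRel (fun u v =>
    match u, v with
    | none, some (Sum.inl _) => True
    | some (Sum.inl x), some (Sum.inr (e, t)) =>
        (t.1 = 0 ∧ x = fst e.1) ∨ (t.1 = k - 1 ∧ x = snd e.1)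
    | some (Sum.inr (e, t)), some (Sum.inr (e', t')) => e = e' ∧ t.1 + 1 = t'.1
    | _, _ => False)

namespace SimpleGraph.Walk

variable {W : Type*} {G : SimpleGraph W}

theorem exists_isCycle_of_injOn {f : ℕ → W} {n : ℕ} (hn : 3 ≤ n)
    (hadj : ∀ i < n, G.Adj (f i) (f (i + 1))) (hinj : Set.InjOn f (Set.Icc 1 n))
    (hclosed : f n = f 0) : ∃ c : G.Walk (f 0) (f 0), c.IsCycle ∧ c.length = n := by
  have hchain : ((List.range (n + 1)).map f).IsChain G.Adj := by
    rwa [List.isChain_map, List.isChain_range_succ]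
  let c : G.Walk (f 0) (f 0) :=
    (ofSupport _ (by simp) hchain).copy (by simp) (by simp [hclosed])
  have hlen : c.length = n := by simp [c]
  have hnil : ¬c.Nil := by rw [← length_eq_zero_iff]; omega
  refine ⟨c, isCycle_iff_isPath_tail_and_le_length.mpr ⟨?_, by omega⟩, hlen⟩
  rw [isPath_def, support_tail_of_not_nil _ hnil]
  simp only [c, support_copy, support_ofSupport, List.range_succ_eq_map, List.map_cons,
    List.tail_cons, List.map_map]
  refine List.nodup_range.map_on fun i hi j hj hij => Nat.succ_injective ?_
  simp only [List.mem_range] at hi hj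
  exact hinj ⟨by simp, by simp; omega⟩ ⟨by simp, by simp; omega⟩ hij

theorem card_le_length_of_subset_support [DecidableEq W] {u : W} {p : G.Walk u u}
    (hp : ¬p.Nil) {s : Finset W} (hs : ∀ w ∈ s, w ∈ p.support) : s.card ≤ p.length := by
  have hsub : s ⊆ p.support.tail.toFinset := by
    intro w hw
    rw [List.mem_toFinset]
    rcases p.mem_support_iff.mp (hs w hw) with rfl | h
    · exact p.end_mem_tail_support hp
    · exact h
  calc s.card ≤ p.support.tail.toFinset.card := Finset.card_le_card hsub
    _ ≤ p.support.tail.length := List.toFinset_card_le _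
    _ = p.length := by simp

theorem IsCycle.exists_adj_ne {u v : W} {p : G.Walk u u} (hp : p.IsCycle)
    (hv : v ∈ p.support) :
    ∃ a b, a ≠ b ∧ G.Adj v a ∧ G.Adj v b ∧ a ∈ p.support ∧ b ∈ p.support := by
  obtain ⟨a, b, hab, hN⟩ := Set.ncard_eq_two.mp (hp.ncard_neighborSet_toSubgraph_eq_two hv)
  have ha : p.toSubgraph.Adj v a := by simp [← Subgraph.mem_neighborSet, hN]
  have hb : p.toSubgraph.Adj v b := by simp [← Subgraph.mem_neighborSet, hN]
  exact ⟨a, b, hab, ha.adj_sub, hb.adj_sub, p.mem_verts_toSubgraph.mp ha.snd_mem,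
    p.mem_verts_toSubgraph.mp hb.snd_mem⟩

theorem IsCycle.mem_support_of_neighborSet_subset {u v a b : W} {p : G.Walk u u}
    (hp : p.IsCycle) (hv : v ∈ p.support) (hN : G.neighborSet v ⊆ {a, b}) :
    a ∈ p.support ∧ b ∈ p.support := by
  obtain ⟨c, d, hcd, hc, hd, hcs, hds⟩ := hp.exists_adj_ne hv
  rcases hN hc with rfl | rfl <;> rcases hN hd with rfl | rfl <;> simp_all

end SimpleGraph.Walk

namespace ApexSubdiv

open SimpleGraph

variable {V : Type*} {G : SimpleGraph V} {k : ℕ} {fst snd : Sym2 V → V}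

@[simp]
theorem adj_none_inl (x : V) : (ApexSubdiv G k fst snd).Adj none (some (.inl x)) := by
  simp [ApexSubdiv]

@[simp]
theorem not_adj_none_inr (e : G.edgeSet) (t : Fin k) :
    ¬(ApexSubdiv G k fst snd).Adj none (some (.inr (e, t))) := by
  simp [ApexSubdiv]

@[simp]
theorem not_adj_inl_inl (x y : V) :
    ¬(ApexSubdiv G k fst snd).Adj (some (.inl x)) (some (.inl y)) := by
  simp [ApexSubdiv]

theorem adj_inl_inr_iff {x : V} {e : G.edgeSet} {t : Fin k} :
    (ApexSubdiv G k fst snd).Adj (some (.inl x)) (some (.inr (e, t))) ↔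
      t.1 = 0 ∧ x = fst e ∨ t.1 = k - 1 ∧ x = snd e := by
  simp [ApexSubdiv]

theorem adj_inr_inr_iff {e e' : G.edgeSet} {t t' : Fin k} :
    (ApexSubdiv G k fst snd).Adj (some (.inr (e, t))) (some (.inr (e', t'))) ↔
      e = e' ∧ (t.1 + 1 = t'.1 ∨ t'.1 + 1 = t.1) := by
  simp only [ApexSubdiv, fromRel_adj, ne_eq, Option.some.injEq, Sum.inr.injEq,
    Prod.mk.injEq, Fin.ext_iff]
  grind

/-- The `i`-th vertex of the subdivided path of `e`: `fst e` at `0`, `u_e^i` for `1 ≤ i ≤ k`, and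
`snd e` for every `i > k`. -/
def pathVert (k : ℕ) (fst snd : Sym2 V → V) (e : G.edgeSet) (i : ℕ) :
    Option (V ⊕ G.edgeSet × Fin k) :=
  if h0 : i = 0 then some (.inl (fst e))
  else if h : i ≤ k then some (.inr (e, ⟨i - 1, by omega⟩))
  else some (.inl (snd e))

theorem pathVert_zero (e : G.edgeSet) : pathVert k fst snd e 0 = some (.inl (fst e)) := rfl

theorem pathVert_fin_succ (e : G.edgeSet) (t : Fin k) :
    pathVert k fst snd e (t + 1) = some (.inr (e, t)) := by
  simp [pathVert, Nat.succ_le_of_lt t.2]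

theorem pathVert_of_lt {e : G.edgeSet} {i : ℕ} (hi : k < i) :
    pathVert k fst snd e i = some (.inl (snd e)) := by
  simp [pathVert, hi.not_ge, (Nat.zero_le k).trans_lt hi |>.ne']

theorem pathVert_ne_none (e : G.edgeSet) (i : ℕ) : pathVert k fst snd e i ≠ none := by
  unfold pathVert; split_ifs <;> simp

theorem pathVert_injOn {e : G.edgeSet} (he : fst e ≠ snd e) :
    Set.InjOn (pathVert k fst snd e) (Set.Iic (k + 1)) := by
  intro i hi j hj hij
  simp only [Set.mem_Iic] at hi hj
  unfold pathVert at hij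
  split_ifs at hij <;> simp_all [Fin.ext_iff, eq_comm] <;> omega

theorem adj_pathVert (hk : 0 < k) (e : G.edgeSet) {i : ℕ} (hi : i ≤ k) :
    (ApexSubdiv G k fst snd).Adj (pathVert k fst snd e i) (pathVert k fst snd e (i + 1)) := by
  unfold pathVert
  split_ifs <;> simp_all [adj_inl_inr_iff, adj_inr_inr_iff, adj_comm] <;> omega

theorem neighborSet_pathVert_subset (e : G.edgeSet) {i : ℕ} (hi : 1 ≤ i) (hik : i ≤ k) :
    (ApexSubdiv G k fst snd).neighborSet (pathVert k fst snd e i) ⊆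
      {pathVert k fst snd e (i - 1), pathVert k fst snd e (i + 1)} := by
  obtain ⟨t, rfl⟩ : ∃ t : Fin k, i = t + 1 := ⟨⟨i - 1, by omega⟩, by simp; omega⟩
  intro w hw
  rw [mem_neighborSet, pathVert_fin_succ] at hw
  rw [Nat.add_sub_cancel]
  rcases w with _ | x | ⟨e', t'⟩
  · simp [adj_comm] at hw
  · rw [adj_comm, adj_inl_inr_iff] at hw
    unfold pathVert
    split_ifs <;> grind
  · rw [adj_inr_inr_iff] at hw
    unfold pathVert
    split_ifs <;> simp_all [Fin.ext_iff] <;> omega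

theorem eq_one_of_adj_pathVert_zero {e : G.edgeSet} (he : fst e ≠ snd e) {j : ℕ}
    (hj : j ≤ k + 1)
    (h : (ApexSubdiv G k fst snd).Adj (pathVert k fst snd e 0) (pathVert k fst snd e j)) :
    j = 1 := by
  rcases Nat.lt_or_ge k j with hkj | hjk
  · rw [pathVert_zero, pathVert_of_lt hkj] at h
    exact absurd h (not_adj_inl_inl _ _)
  have hj0 : j ≠ 0 := by rintro rfl; exact h.ne rfl
  have hinj := pathVert_injOn (k := k) he
  rcases neighborSet_pathVert_subset e (by omega) hjk h.symm with h0 | h0 <;>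
    · have := hinj (by simp) (by simp; omega) h0
      omega

section Cycle

variable {u : Option (V ⊕ G.edgeSet × Fin k)} {p : (ApexSubdiv G k fst snd).Walk u u}

theorem exists_inr_mem_support (hp : p.IsCycle) : ∃ e t, some (.inr (e, t)) ∈ p.support := by
  have of_inl : ∀ x, some (.inl x) ∈ p.support → ∃ e t, some (.inr (e, t)) ∈ p.support := by
    intro x hx
    obtain ⟨a, b, hab, ha, hb, has, hbs⟩ := hp.exists_adj_ne hx
    rcases a with _ | y | ⟨e, t⟩
    · rcases b with _ | y | ⟨e, t⟩
      · exact absurd rfl hab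
      · exact absurd hb (not_adj_inl_inl _ _)
      · exact ⟨e, t, hbs⟩
    · exact absurd ha (not_adj_inl_inl _ _)
    · exact ⟨e, t, has⟩
  rcases u with _ | x | ⟨e, t⟩
  · obtain ⟨a, -, -, ha, -, has, -⟩ := hp.exists_adj_ne p.start_mem_support
    rcases a with _ | x | ⟨e, t⟩
    · exact absurd rfl ha.ne
    · exact of_inl x has
    · exact absurd ha (not_adj_none_inr _ _)
  · exact of_inl x p.start_mem_support
  · exact ⟨e, t, p.start_mem_support⟩

theorem pathVert_mem_support (hp : p.IsCycle) {e : G.edgeSet} {t : Fin k}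
    (ht : some (.inr (e, t)) ∈ p.support) {j : ℕ} (hj : j ≤ k + 1) :
    pathVert k fst snd e j ∈ p.support := by
  have step : ∀ i, 1 ≤ i → i ≤ k → pathVert k fst snd e i ∈ p.support →
      pathVert k fst snd e (i - 1) ∈ p.support ∧ pathVert k fst snd e (i + 1) ∈ p.support :=
    fun i hi hik hmem => hp.mem_support_of_neighborSet_subset hmem
      (neighborSet_pathVert_subset e hi hik)
  rw [← pathVert_fin_succ] at ht
  rcases le_total j (t + 1) with hjt | hjt
  · refine Nat.decreasingInduction (motive := fun i _ => pathVert k fst snd e i ∈ p.support)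
      (fun i hi ih => ?_) ht hjt
    simpa using (step (i + 1) (by omega) (by omega) ih).1
  · refine Nat.le_induction (P := fun i _ => i ≤ k + 1 → pathVert k fst snd e i ∈ p.support)
      (fun _ => ht) (fun i hi ih hik => ?_) j hjt hj
    exact (step i (by omega) (by omega) (ih (by omega))).2

theorem add_three_le_length (hfs : ∀ e : G.edgeSet, fst e ≠ snd e) (hp : p.IsCycle) :
    k + 3 ≤ p.length := by
  classical
  obtain ⟨e, t, ht⟩ := exists_inr_mem_support hp
  have hpath : ∀ j ≤ k + 1, pathVert k fst snd e j ∈ p.support :=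
    fun j hj => pathVert_mem_support hp ht hj
  obtain ⟨c, hc, hcs, hc1⟩ : ∃ c, (ApexSubdiv G k fst snd).Adj (pathVert k fst snd e 0) c ∧
      c ∈ p.support ∧ c ≠ pathVert k fst snd e 1 := by
    obtain ⟨a, b, hab, ha, hb, has, hbs⟩ := hp.exists_adj_ne (hpath 0 (by omega))
    by_cases h : a = pathVert k fst snd e 1
    · exact ⟨b, hb, hbs, h ▸ hab.symm⟩
    · exact ⟨a, ha, has, h⟩
  have hc_notMem : c ∉ (Finset.range (k + 2)).image (pathVert k fst snd e) := by
    simp only [Finset.mem_image, Finset.mem_range, not_exists, not_and]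
    rintro j hj rfl
    exact hc1 (by rw [eq_one_of_adj_pathVert_zero (hfs e) (by omega) hc])
  have hcard : (insert c ((Finset.range (k + 2)).image (pathVert k fst snd e))).card = k + 3 := by
    rw [Finset.card_insert_of_notMem hc_notMem, Finset.card_image_of_injOn, Finset.card_range]
    exact (pathVert_injOn (hfs e)).mono fun j hj => by simp at hj ⊢; omega
  rw [← hcard]
  refine Walk.card_le_length_of_subset_support hp.not_nil ?_
  simp only [Finset.mem_insert, Finset.mem_image, Finset.mem_range]
  rintro w (rfl | ⟨j, hj, rfl⟩)
  · exact hcs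
  · exact hpath j (by omega)

end Cycle

theorem exists_isCycle_length_eq (hk : 0 < k) (e : G.edgeSet) (he : fst e ≠ snd e) :
    ∃ c : (ApexSubdiv G k fst snd).Walk none none, c.IsCycle ∧ c.length = k + 3 := by
  let f : ℕ → Option (V ⊕ G.edgeSet × Fin k) := fun j =>
    if j = 0 ∨ k + 3 ≤ j then none else pathVert k fst snd e (j - 1)
  have hf : ∀ j, 1 ≤ j → j ≤ k + 2 → f j = pathVert k fst snd e (j - 1) := fun j h1 h2 => by
    simp only [f]; rw [if_neg (by omega)]
  refine Walk.exists_isCycle_of_injOn (f := f) (by omega) ?_ ?_ (by simp [f])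
  · intro i hi
    rcases Nat.eq_zero_or_pos i with rfl | hi0
    · simp [f, pathVert_zero]
    rcases Nat.lt_or_ge i (k + 2) with hik | hik
    · rw [hf i (by omega) (by omega), hf (i + 1) (by omega) (by omega)]
      simpa [Nat.sub_add_cancel hi0] using adj_pathVert hk e (i := i - 1) (by omega)
    · obtain rfl : i = k + 2 := by omega
      simp [f, pathVert_of_lt, adj_comm]
  · intro i hi j hj hij
    simp only [Set.mem_Icc] at hi hj
    have hinj := pathVert_injOn (k := k) he
    rcases Nat.lt_or_ge i (k + 3) with hik | hik <;> rcases Nat.lt_or_ge j (k + 3) with hjk | hjk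
    · rw [hf i (by omega) (by omega), hf j (by omega) (by omega)] at hij
      have := hinj (by simp; omega) (by simp; omega) hij
      omega
    · rw [hf i (by omega) (by omega)] at hij
      exact absurd (by simpa [f, show k + 3 ≤ j by omega] using hij) (pathVert_ne_none _ _)
    · rw [hf j (by omega) (by omega)] at hij
      exact absurd (by simpa [f, show k + 3 ≤ i by omega] using hij.symm) (pathVert_ne_none _ _)
    · omega

end ApexSubdiv

theorem apexSubdiv_girth_general {V : Type*} (G : SimpleGraph V) (hE : G.edgeSet.Nonempty) (k : ℕ)
    (hk7 : 7 ≤ k)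
    (fst snd : Sym2 V → V) (hor : ∀ e ∈ G.edgeSet, e = s(fst e, snd e)) :
    (ApexSubdiv G k fst snd).egirth = (k : ℕ∞) + 3 := by
  have hfs : ∀ e : G.edgeSet, fst e ≠ snd e := fun e => by
    have he := e.2
    rw [hor e e.2, SimpleGraph.mem_edgeSet] at he
    exact he.ne
  obtain ⟨e, he⟩ := hE
  obtain ⟨c, hc, hlen⟩ := ApexSubdiv.exists_isCycle_length_eq (by omega : 0 < k) ⟨e, he⟩ (hfs _)
  refine le_antisymm ?_ (SimpleGraph.le_egirth.mpr fun _ p hp => ?_)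
  · calc _ ≤ (c.length : ℕ∞) := SimpleGraph.egirth_le_length hc
      _ = k + 3 := by rw [hlen]; push_cast; rfl
  · exact_mod_cast ApexSubdiv.add_three_le_length hfs hp

/-- For every simple graph `G` with at least one edge and every odd integer `k ≥ 7`, the girth
of the apex `k`-subdivision of `G` equals `k + 3`. -/
theorem apexSubdiv_girth {V : Type*} (G : SimpleGraph V) (hE : G.edgeSet.Nonempty) (k : ℕ)
    (hk : Odd k) (hk7 : 7 ≤ k)
    (fst snd : Sym2 V → V) (hor : ∀ e ∈ G.edgeSet, e = s(fst e, snd e)) :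
    (ApexSubdiv G k fst snd).egirth = (k : ℕ∞) + 3 :=
  apexSubdiv_girth_general G hE k hk7 fst snd hor
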